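/- In the Lie algebra so(p/2+1, p/2) with p even, the triple (E, F, H) defined on the null basis {η^k, η̃^k, θ} (k = 0,…,p/2-1) by E = Σ_{k=0}^{p/2-2} a_k η^{k+1}∧η̃^k + b θ∧η̃^{p/2-1}, F = -θ_C E, H = Σ_k (p-2k) η̃^k ∧ η^k satisfies the sl₂ relations [H,E]=2E, [H,F]=-2F, [E,F]=H if and only if a_k² = (p-k)(k+1) for k = 0,…,p/2-2 and b² = (p/2)(p/2+1). -/

import Mathlib

/-!
STATEMENT 11: the Kostant–Sekiguchi triple in `so(p/2+1, p/2)`, `p = 2(qm+1)` even.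
The vector space `V` has the null basis `η^k, η̃^k` (k = 0,…,p/2-1) and `θ`, with
bilinear form `τ(η^i, η̃^j) = δ^{ij}` (symmetric) and `τ(θ,θ) = s = ±1`.  Two-forms
`u∧v` act as `w ↦ τ(v,w) u - τ(u,w) v`, and the Cartan involution is conjugation by
the map `g` exchanging `η^i ↔ η̃^i` and sending `θ ↦ s θ`.
-/

/-- Index of the null basis `{η^i} ⊕ {η̃^i} ⊕ {θ}` of `ℝ^{q+1,q}` with `q = qm+1`. -/
abbrev BasisIdx (q : ℕ) := (Fin q ⊕ Fin q) ⊕ Unit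

abbrev Vec (q : ℕ) := BasisIdx q → ℝ

def eta' {q : ℕ} (i : Fin q) : Vec q := fun x => if x = Sum.inl (Sum.inl i) then 1 else 0

def etat' {q : ℕ} (i : Fin q) : Vec q := fun x => if x = Sum.inl (Sum.inr i) then 1 else 0

def theta' {q : ℕ} : Vec q := fun x => if x = Sum.inr () then 1 else 0

/-- The bilinear form `τ`, nonzero only on `τ(η^i, η̃^j) = δ^{ij}` and `τ(θ,θ) = s`. -/
noncomputable def tau' {q : ℕ} (s : ℝ) (x y : Vec q) : ℝ :=
  (∑ i : Fin q, (x (Sum.inl (Sum.inl i)) * y (Sum.inl (Sum.inr i))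
      + x (Sum.inl (Sum.inr i)) * y (Sum.inl (Sum.inl i))))
    + s * x (Sum.inr ()) * y (Sum.inr ())

/-- The action of the two-form `u ∧ v`: `w ↦ τ(v,w) u - τ(u,w) v`. -/
noncomputable def wedge' {q : ℕ} (s : ℝ) (u v : Vec q) : Vec q → Vec q :=
  fun w => tau' s v w • u - tau' s u w • v

/-- The isometry implementing the Cartan involution: `η^i ↔ η̃^i`, `θ ↦ s θ`;
the Cartan involution of `so(q+1,q)` is `θ_C(X) = g ∘ X ∘ g`. -/
def gInv {q : ℕ} (s : ℝ) (x : Vec q) : Vec q := fun b =>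
  match b with
  | Sum.inl (Sum.inl i) => x (Sum.inl (Sum.inr i))
  | Sum.inl (Sum.inr i) => x (Sum.inl (Sum.inl i))
  | Sum.inr _ => s * x (Sum.inr ())

/-- Commutator of endomorphisms. -/
def lieBr {q : ℕ} (f g : Vec q → Vec q) : Vec q → Vec q := fun w => f (g w) - g (f w)

/-- `E = Σ_{k=0}^{p/2-2} a_k η^{k+1}∧η̃^k + b θ∧η̃^{p/2-1}`. -/
noncomputable def Enil (qm : ℕ) (s : ℝ) (a : Fin qm → ℝ) (b : ℝ) :
    Vec (qm + 1) → Vec (qm + 1) :=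
  (∑ k : Fin qm, a k • wedge' s (eta' k.succ) (etat' k.castSucc))
    + b • wedge' s theta' (etat' (Fin.last qm))

/-- `F = -θ_C E`. -/
noncomputable def Fnil (qm : ℕ) (s : ℝ) (a : Fin qm → ℝ) (b : ℝ) :
    Vec (qm + 1) → Vec (qm + 1) :=
  fun w => -gInv s (Enil qm s a b (gInv s w))

/-- `H = Σ_k (p-2k) η̃^k ∧ η^k`, `p = 2(qm+1)`. -/
noncomputable def Hcart (qm : ℕ) (s : ℝ) : Vec (qm + 1) → Vec (qm + 1) :=
  ∑ i : Fin (qm + 1), ((2 * ((qm : ℝ) + 1) - 2 * (i : ℕ)) • wedge' s (etat' i) (eta' i))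


/-!
`E` and `F = -θ_C E` are weighted shifts along the chain
`η^0 → η^1 → ⋯ → η^{p/2-1} → θ → η̃^{p/2-1} → ⋯ → η̃^0` (in opposite directions), and `H` is
diagonal with weight `∓(p - 2k)` on `η^k`, `η̃^k` and `0` on `θ`, so `[H,E] = 2E` and
`[H,F] = -2F` hold for all coefficients. `[E,F]` is diagonal as well: on `η̃^k` its entry is
`c_{k+1} - c_k`, where `c_0 = 0`, `c_{k+1} = a_k²` for `k < p/2 - 1` and `c_{p/2} = b² s² = b²`.
So `[E,F] = H` iff `c_{k+1} - c_k = p - 2k` for all `k`, i.e. iff `c_k = k (p + 1 - k)`.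
-/

open Sum

section Coordinates

variable {q : ℕ} (s : ℝ) (w : Vec q)

@[simp] lemma tau'_eta' (k : Fin q) : tau' s (eta' k) w = w (inl (inr k)) := by
  simp [tau', eta']

@[simp] lemma tau'_etat' (k : Fin q) : tau' s (etat' k) w = w (inl (inl k)) := by
  simp [tau', etat']

@[simp] lemma tau'_theta' : tau' s theta' w = s * w (inr ()) := by
  simp [tau', theta']

lemma gInv_eta (i : Fin q) : gInv s w (inl (inl i)) = w (inl (inr i)) := rfl

lemma gInv_etat (i : Fin q) : gInv s w (inl (inr i)) = w (inl (inl i)) := rfl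

lemma gInv_theta (u : Unit) : gInv s w (inr u) = s * w (inr ()) := rfl

end Coordinates

section Triple

variable {qm : ℕ} (s : ℝ) (a : Fin qm → ℝ) (b : ℝ) (w : Vec (qm + 1))

lemma Enil_apply (x : BasisIdx (qm + 1)) :
    Enil qm s a b w x
      = (∑ k : Fin qm, a k * wedge' s (eta' k.succ) (etat' k.castSucc) w x)
        + b * wedge' s theta' (etat' (Fin.last qm)) w x := by
  simp [Enil, Finset.sum_apply]

lemma Enil_eta_zero : Enil qm s a b w (inl (inl 0)) = 0 := by
  simp [Enil_apply, wedge', eta', etat', theta', (Fin.succ_ne_zero _).symm]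

lemma Enil_eta_succ (k : Fin qm) :
    Enil qm s a b w (inl (inl k.succ)) = a k * w (inl (inl k.castSucc)) := by
  simp [Enil_apply, wedge', eta', etat', theta']

lemma Enil_etat_castSucc (k : Fin qm) :
    Enil qm s a b w (inl (inr k.castSucc)) = -a k * w (inl (inr k.succ)) := by
  simp [Enil_apply, wedge', eta', etat', theta', (Fin.castSucc_lt_last _).ne]

lemma Enil_etat_last :
    Enil qm s a b w (inl (inr (Fin.last qm))) = -(b * s) * w (inr ()) := by
  simp [Enil_apply, wedge', eta', etat', theta', (Fin.castSucc_lt_last _).ne', mul_assoc]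

lemma Enil_theta : Enil qm s a b w (inr ()) = b * w (inl (inl (Fin.last qm))) := by
  simp [Enil_apply, wedge', eta', etat', theta']

lemma Fnil_eta_castSucc (k : Fin qm) :
    Fnil qm s a b w (inl (inl k.castSucc)) = a k * w (inl (inl k.succ)) := by
  simp only [Fnil, Pi.neg_apply, gInv_eta, Enil_etat_castSucc, gInv_etat]
  ring

lemma Fnil_eta_last :
    Fnil qm s a b w (inl (inl (Fin.last qm))) = b * s * s * w (inr ()) := by
  simp only [Fnil, Pi.neg_apply, gInv_eta, Enil_etat_last, gInv_theta]
  ring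

lemma Fnil_etat_zero : Fnil qm s a b w (inl (inr 0)) = 0 := by
  simp only [Fnil, Pi.neg_apply, gInv_etat, Enil_eta_zero, neg_zero]

lemma Fnil_etat_succ (k : Fin qm) :
    Fnil qm s a b w (inl (inr k.succ)) = -a k * w (inl (inr k.castSucc)) := by
  simp only [Fnil, Pi.neg_apply, gInv_etat, Enil_eta_succ, gInv_eta]
  ring

lemma Fnil_theta : Fnil qm s a b w (inr ()) = -(s * b) * w (inl (inr (Fin.last qm))) := by
  simp only [Fnil, Pi.neg_apply, gInv_theta, Enil_theta, gInv_eta]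
  ring

lemma Hcart_apply (x : BasisIdx (qm + 1)) :
    Hcart qm s w x = ∑ i : Fin (qm + 1),
      (2 * ((qm : ℝ) + 1) - 2 * (i : ℕ)) * wedge' s (etat' i) (eta' i) w x := by
  simp [Hcart, Finset.sum_apply]

lemma Hcart_eta (i : Fin (qm + 1)) :
    Hcart qm s w (inl (inl i)) = -(2 * ((qm : ℝ) + 1) - 2 * (i : ℕ)) * w (inl (inl i)) := by
  simp [Hcart_apply, wedge', eta', etat', ← neg_mul]

lemma Hcart_etat (i : Fin (qm + 1)) :
    Hcart qm s w (inl (inr i)) = (2 * ((qm : ℝ) + 1) - 2 * (i : ℕ)) * w (inl (inr i)) := by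
  simp [Hcart_apply, wedge', eta', etat']

lemma Hcart_theta : Hcart qm s w (inr ()) = 0 := by
  simp [Hcart_apply, wedge', eta', etat']

lemma lieBr_Hcart_Enil : lieBr (Hcart qm s) (Enil qm s a b) = (2 : ℝ) • Enil qm s a b := by
  funext w x
  simp only [lieBr, Pi.sub_apply, Pi.smul_apply, smul_eq_mul]
  rcases x with ((i | i) | u)
  · cases i using Fin.cases with
    | zero => simp only [Enil_eta_zero, Hcart_eta]; ring
    | succ k => simp only [Enil_eta_succ, Hcart_eta, Fin.val_succ, Fin.val_castSucc]; push_cast; ring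
  · cases i using Fin.lastCases with
    | last => simp only [Enil_etat_last, Hcart_etat, Hcart_theta, Fin.val_last]; ring
    | cast k =>
      simp only [Enil_etat_castSucc, Hcart_etat, Fin.val_succ, Fin.val_castSucc]; push_cast; ring
  · cases u
    simp only [Enil_theta, Hcart_theta, Hcart_eta, Fin.val_last]; ring

lemma lieBr_Hcart_Fnil : lieBr (Hcart qm s) (Fnil qm s a b) = (-2 : ℝ) • Fnil qm s a b := by
  funext w x
  simp only [lieBr, Pi.sub_apply, Pi.smul_apply, smul_eq_mul]
  rcases x with ((i | i) | u)
  · cases i using Fin.lastCases with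
    | last => simp only [Fnil_eta_last, Hcart_eta, Hcart_theta, Fin.val_last]; ring
    | cast k =>
      simp only [Fnil_eta_castSucc, Hcart_eta, Fin.val_succ, Fin.val_castSucc]; push_cast; ring
  · cases i using Fin.cases with
    | zero => simp only [Fnil_etat_zero, Hcart_etat]; ring
    | succ k =>
      simp only [Fnil_etat_succ, Hcart_etat, Fin.val_succ, Fin.val_castSucc]; push_cast; ring
  · cases u
    simp only [Fnil_theta, Hcart_theta, Hcart_etat, Fin.val_last]; ring

end Triple

lemma forall_sub_eq_sub_iff_forall_eq {G : Type*} [AddGroup G] {c g : ℕ → G}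
    (h0 : c 0 = g 0) (n : ℕ) :
    (∀ i < n, c (i + 1) - c i = g (i + 1) - g i) ↔ ∀ i < n + 1, c i = g i := by
  induction n with
  | zero => simp [h0]
  | succ n ih =>
    rw [Nat.forall_lt_succ_right, ih, Nat.forall_lt_succ_right (n := n + 1)]
    exact and_congr_right fun h => by rw [h n n.lt_add_one, sub_left_inj]

def coeffSq {qm : ℕ} (a : Fin qm → ℝ) (b : ℝ) : ℕ → ℝ
  | 0 => 0
  | i + 1 => if h : i < qm then a ⟨i, h⟩ ^ 2 else b ^ 2

section Commutator

variable {qm : ℕ} {s : ℝ} (a : Fin qm → ℝ) (b : ℝ) (w : Vec (qm + 1))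

lemma coeffSq_val_succ (k : Fin qm) : coeffSq a b (k + 1) = a k ^ 2 := by
  simp [coeffSq]

lemma coeffSq_succ_self : coeffSq a b (qm + 1) = b ^ 2 := by
  simp [coeffSq]

lemma Enil_Fnil_eta (i : Fin (qm + 1)) :
    Enil qm s a b (Fnil qm s a b w) (inl (inl i)) = coeffSq a b i * w (inl (inl i)) := by
  cases i using Fin.cases with
  | zero => simp [Enil_eta_zero, coeffSq]
  | succ k =>
    rw [Enil_eta_succ, Fnil_eta_castSucc, Fin.val_succ, coeffSq_val_succ]
    ring

lemma Fnil_Enil_eta (hs : s * s = 1) (i : Fin (qm + 1)) :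
    Fnil qm s a b (Enil qm s a b w) (inl (inl i)) = coeffSq a b (i + 1) * w (inl (inl i)) := by
  cases i using Fin.lastCases with
  | last =>
    rw [Fnil_eta_last, Enil_theta, Fin.val_last, coeffSq_succ_self]
    linear_combination b ^ 2 * w (inl (inl (Fin.last qm))) * hs
  | cast k =>
    rw [Fnil_eta_castSucc, Enil_eta_succ, Fin.val_castSucc, coeffSq_val_succ]
    ring

lemma Enil_Fnil_etat (hs : s * s = 1) (i : Fin (qm + 1)) :
    Enil qm s a b (Fnil qm s a b w) (inl (inr i)) = coeffSq a b (i + 1) * w (inl (inr i)) := by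
  cases i using Fin.lastCases with
  | last =>
    rw [Enil_etat_last, Fnil_theta, Fin.val_last, coeffSq_succ_self]
    linear_combination b ^ 2 * w (inl (inr (Fin.last qm))) * hs
  | cast k =>
    rw [Enil_etat_castSucc, Fnil_etat_succ, Fin.val_castSucc, coeffSq_val_succ]
    ring

lemma Fnil_Enil_etat (i : Fin (qm + 1)) :
    Fnil qm s a b (Enil qm s a b w) (inl (inr i)) = coeffSq a b i * w (inl (inr i)) := by
  cases i using Fin.cases with
  | zero => simp [Fnil_etat_zero, coeffSq]
  | succ k =>
    rw [Fnil_etat_succ, Enil_etat_castSucc, Fin.val_succ, coeffSq_val_succ]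
    ring

lemma lieBr_Enil_Fnil_theta : lieBr (Enil qm s a b) (Fnil qm s a b) w (inr ()) = 0 := by
  simp only [lieBr, Pi.sub_apply, Enil_theta, Fnil_eta_last, Fnil_theta, Enil_etat_last]
  ring

lemma lieBr_Enil_Fnil_eq_Hcart_iff (hs : s * s = 1) :
    lieBr (Enil qm s a b) (Fnil qm s a b) = Hcart qm s ↔
      ∀ i < qm + 1, coeffSq a b (i + 1) - coeffSq a b i = 2 * ((qm : ℝ) + 1) - 2 * i := by
  constructor
  · intro h i hi
    have hcoord := congrFun (congrFun h (etat' ⟨i, hi⟩)) (inl (inr ⟨i, hi⟩))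
    simpa [lieBr, Enil_Fnil_etat a b _ hs, Fnil_Enil_etat, Hcart_etat, etat'] using hcoord
  · intro h
    funext w x
    rcases x with ((i | i) | u)
    · rw [lieBr, Pi.sub_apply, Enil_Fnil_eta, Fnil_Enil_eta a b w hs, Hcart_eta]
      linear_combination -w (inl (inl i)) * h i i.isLt
    · rw [lieBr, Pi.sub_apply, Enil_Fnil_etat a b w hs, Fnil_Enil_etat, Hcart_etat]
      linear_combination w (inl (inr i)) * h i i.isLt
    · rw [lieBr_Enil_Fnil_theta, Hcart_theta]

end Commutator

lemma forall_coeffSq_eq_iff {qm : ℕ} (a : Fin qm → ℝ) (b : ℝ) :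
    (∀ i < qm + 2, coeffSq a b i = i * (2 * ((qm : ℝ) + 1) + 1 - i)) ↔
      (∀ k : Fin qm, a k ^ 2 = (2 * ((qm : ℝ) + 1) - (k : ℕ)) * ((k : ℕ) + 1)) ∧
        b ^ 2 = ((qm : ℝ) + 1) * ((qm : ℝ) + 2) := by
  constructor
  · intro h
    refine ⟨fun k => ?_, ?_⟩
    · have hk := (coeffSq_val_succ a b k).symm.trans (h (k + 1) (by omega))
      push_cast at hk
      linear_combination hk
    · have hb := (coeffSq_succ_self a b).symm.trans (h (qm + 1) (by omega))
      push_cast at hb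
      linear_combination hb
  · rintro ⟨ha, hb⟩ (_ | i) hi
    · simp [coeffSq]
    · rcases (show i ≤ qm by omega).lt_or_eq with hi | rfl
      · rw [coeffSq_val_succ a b ⟨i, hi⟩, ha]
        push_cast; ring
      · rw [coeffSq_succ_self, hb]
        push_cast; ring

theorem stmt11 (qm : ℕ) (s : ℝ) (hs : s = 1 ∨ s = -1)
    (a : Fin qm → ℝ) (b : ℝ) :
    (lieBr (Hcart qm s) (Enil qm s a b) = (2 : ℝ) • Enil qm s a b ∧
     lieBr (Hcart qm s) (Fnil qm s a b) = (-2 : ℝ) • Fnil qm s a b ∧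
     lieBr (Enil qm s a b) (Fnil qm s a b) = Hcart qm s)
    ↔ ((∀ k : Fin qm, (a k) ^ 2 = (2 * ((qm : ℝ) + 1) - (k : ℕ)) * ((k : ℕ) + 1)) ∧
        b ^ 2 = ((qm : ℝ) + 1) * ((qm : ℝ) + 2)) := by
  have hs2 : s * s = 1 := by rcases hs with rfl | rfl <;> norm_num
  -- `g i = ∑_{j < i} (p - 2j)` with `p = 2 (qm + 1)`
  let g : ℕ → ℝ := fun i => i * (2 * ((qm : ℝ) + 1) + 1 - i)
  have hg (i : ℕ) : 2 * ((qm : ℝ) + 1) - 2 * i = g (i + 1) - g i := by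
    simp only [g]; push_cast; ring
  rw [and_iff_right (lieBr_Hcart_Enil s a b), and_iff_right (lieBr_Hcart_Fnil s a b),
    lieBr_Enil_Fnil_eq_Hcart_iff a b hs2, ← forall_coeffSq_eq_iff]
  simp only [hg]
  exact forall_sub_eq_sub_iff_forall_eq (by simp [g, coeffSq]) (qm + 1)
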